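/- If λ > ℵ₀ is a strong limit cardinal, then among the graphs with at most λ vertices in which every vertex has valence < λ, there is a universal one, i.e., a graph into which every such graph embeds as a subgraph. -/

import Mathlib

/-!
Only connected graphs need to be embedded: `λ` disjoint copies of a graph containing every
connected one contain every graph on at most `λ` vertices.

If `λ` is regular, a connected graph with all valences `< λ` has fewer than `λ` vertices, so
disjoint cliques of all sizes `< λ` suffice.

If `λ` is singular, choose infinite slots of sizes `< λ`, increasing and cofinal in `λ`, indexed by
a set `I` of size `cf λ < λ`. In a connected graph with root `w₀`, let the core of stage `i` be the
set of vertices joined to `w₀` by a walk through vertices of valence at most `|slot i|`; it has at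
most `|slot i|` vertices. Give every vertex a stage whose core contains it, and as block the least
stage in its closed neighbourhood. A vertex of block `i` lies within distance one of the core of
stage `i`, so the vertices of block `i` inject into slot `i`. Of two adjacent vertices, the one of
smaller stage has its stage between the block and the stage of the other. Joining all codes
(stage, block, position) related in this way gives a graph into which the coding is an embedding,
and in which a code of stage `s` only meets positions in slot `s`, hence has fewer than
`|I|² · |slot s| < λ` neighbours.
-/

open Cardinal Set Function SimpleGraph

universe u

namespace Cardinal

lemma mk_Iio_ord_toType_lt {c : Cardinal} (x : c.ord.ToType) : #(Iio x) < c := by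
  simpa using mk_Iio_lt x

lemma exists_le_mk_Iio_ord_toType {c ν : Cardinal} (h : ν < c) :
    ∃ x : c.ord.ToType, ν ≤ #(Iio x) := by
  have hν : ν.ord < c.ord := ord_lt_ord.2 h
  refine ⟨Ordinal.ToType.mk ⟨ν.ord, hν⟩, ?_⟩
  have h := congrArg Ordinal.card
    (Ordinal.ToType.mk_symm_apply_coe (Ordinal.ToType.mk (o := c.ord) ⟨ν.ord, hν⟩))
  rw [RelIso.symm_apply_apply, Ordinal.card_typein, card_ord] at h
  exact h.le

lemma exists_injective_prod_of_mk_fiber_le {W P : Type u} {I : Type*} (β : W → I)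
    (S : I → Set P) (h : ∀ i, #{w // β w = i} ≤ #(S i)) :
    ∃ p : W → P, (∀ w, p w ∈ S (β w)) ∧ Injective fun w => (β w, p w) := by
  have e : ∀ i, {w // β w = i} ↪ S i := fun i => Classical.choice ((le_def _ _).1 (h i))
  let F : W ↪ Σ i, S i :=
    (Equiv.sigmaFiberEquiv β).symm.toEmbedding.trans (Embedding.sigmaMap (Embedding.refl I) e)
  exact ⟨fun w => (F w).2, fun w => (F w).2.2, fun a b hab =>
    F.injective (Sigma.subtype_ext (congrArg Prod.fst hab) (congrArg Prod.snd hab))⟩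

end Cardinal

namespace SimpleGraph

section Reach

variable {W : Type} (H : SimpleGraph W)

def reachWithin (D : Set W) (w₀ : W) : Set W :=
  {w | ∃ p : H.Walk w w₀, ∀ x ∈ p.support, x ∈ D}

def reachWithinSteps (D : Set W) (w₀ : W) (n : ℕ) : Set W :=
  {w | ∃ p : H.Walk w w₀, p.length = n ∧ ∀ x ∈ p.support, x ∈ D}

variable {H} {D : Set W} {w₀ : W}

lemma reachWithin_eq_iUnion_reachWithinSteps : H.reachWithin D w₀ = ⋃ n, H.reachWithinSteps D w₀ n := by
  ext w
  simp only [reachWithin, reachWithinSteps, mem_iUnion, mem_ofPred_eq]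
  exact ⟨fun ⟨p, hp⟩ => ⟨_, p, rfl, hp⟩, fun ⟨_, p, _, hp⟩ => ⟨p, hp⟩⟩

lemma reachWithin_subset : H.reachWithin D w₀ ⊆ D :=
  fun _ ⟨p, hp⟩ => hp _ p.start_mem_support

lemma reachWithinSteps_subset (n : ℕ) : H.reachWithinSteps D w₀ n ⊆ D :=
  fun _ ⟨p, _, hp⟩ => hp _ p.start_mem_support

lemma reachWithinSteps_zero_subset : H.reachWithinSteps D w₀ 0 ⊆ {w₀} :=
  fun _ ⟨_, hp, _⟩ => Walk.eq_of_length_eq_zero hp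

lemma reachWithinSteps_succ_subset (n : ℕ) :
    H.reachWithinSteps D w₀ (n + 1) ⊆ ⋃ u ∈ H.reachWithinSteps D w₀ n, H.neighborSet u := by
  rintro w ⟨_ | ⟨hadj, q⟩, hq, hD⟩
  · simp at hq
  exact mem_biUnion ⟨q, by simpa using hq, fun x hx => hD x (by simp [hx])⟩ hadj.symm

lemma mk_biUnion_neighborSet_le {μ : Cardinal} (hμ : ℵ₀ ≤ μ) {S : Set W} (hS : #S ≤ μ)
    (hdeg : ∀ u ∈ S, #(H.neighborSet u) ≤ μ) : #(⋃ u ∈ S, H.neighborSet u) ≤ μ :=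
  (mk_biUnion_le _ _).trans (mul_le_of_le hμ hS (ciSup_le' fun u => hdeg u u.2))

lemma mk_union_biUnion_neighborSet_le {μ : Cardinal} (hμ : ℵ₀ ≤ μ) {S : Set W} (hS : #S ≤ μ)
    (hdeg : ∀ u ∈ S, #(H.neighborSet u) ≤ μ) : #(S ∪ ⋃ u ∈ S, H.neighborSet u : Set W) ≤ μ :=
  (mk_union_le _ _).trans (add_le_of_le hμ hS (mk_biUnion_neighborSet_le hμ hS hdeg))

lemma mk_reachWithin_le {μ : Cardinal} (hμ : ℵ₀ ≤ μ) (hD : ∀ v ∈ D, #(H.neighborSet v) ≤ μ)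
    (w₀ : W) : #(H.reachWithin D w₀) ≤ μ := by
  have hsteps : ∀ n, #(H.reachWithinSteps D w₀ n) ≤ μ := by
    intro n
    induction n with
    | zero =>
      exact (mk_le_mk_of_subset reachWithinSteps_zero_subset).trans
        (by simpa using one_le_aleph0.trans hμ)
    | succ n ih =>
      exact (mk_le_mk_of_subset (reachWithinSteps_succ_subset n)).trans
        (mk_biUnion_neighborSet_le hμ ih fun u hu => hD u (reachWithinSteps_subset n hu))
  rw [reachWithin_eq_iUnion_reachWithinSteps]
  exact (mk_iUnion_le _).trans (mul_le_of_le hμ (by simp [hμ]) (ciSup_le' hsteps))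

lemma Connected.exists_mem_reachWithin {I : Type*} [Preorder I] [IsDirectedOrder I]
    (hH : H.Connected) {D : I → Set W} (hD : Monotone D) (hcover : ∀ w, ∃ i, w ∈ D i)
    (w₀ w : W) : ∃ i, w ∈ H.reachWithin (D i) w₀ := by
  classical
  choose idx hidx using hcover
  have : Nonempty I := ⟨idx w⟩
  let p := (hH.preconnected w w₀).some
  obtain ⟨i, hi⟩ := (p.support.toFinset.image idx).exists_le
  exact ⟨i, p, fun x hx => hD (hi _ (Finset.mem_image_of_mem _ (by simpa using hx))) (hidx x)⟩

lemma Connected.mk_lt_of_isRegular (hH : H.Connected) {κ : Cardinal} (hκ : κ.IsRegular)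
    (hκ₀ : ℵ₀ < κ) (hdeg : ∀ w, #(H.neighborSet w) < κ) : #W < κ := by
  obtain ⟨w₀⟩ := hH.nonempty
  have hsteps : ∀ n, #(H.reachWithinSteps Set.univ w₀ n) < κ := by
    intro n
    induction n with
    | zero =>
      exact (mk_le_mk_of_subset reachWithinSteps_zero_subset).trans_lt
        (by simpa using one_lt_aleph0.trans hκ₀)
    | succ n ih =>
      exact (mk_le_mk_of_subset (reachWithinSteps_succ_subset n)).trans_lt
        ((card_biUnion_lt_iff_forall_of_isRegular hκ ih).2 fun u _ => hdeg u)
  have huniv : H.reachWithin Set.univ w₀ = Set.univ :=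
    eq_univ_of_forall fun w => ⟨(hH.preconnected w w₀).some, fun _ _ => trivial⟩
  rw [← mk_univ, ← huniv, reachWithin_eq_iUnion_reachWithinSteps]
  exact (card_iUnion_lt_iff_forall_of_isRegular hκ (by simpa using hκ₀)).2 hsteps

end Reach

def ContainsConnected (κ : Cardinal.{u}) {V : Type u} (G : SimpleGraph V) : Prop :=
  ∀ ⦃W : Type u⦄ (H : SimpleGraph W), H.Connected → (∀ w, #(H.neighborSet w) < κ) →
    ∃ f : H →g G, Injective f

lemma mk_neighborSet_boxProd_bot_le {C V : Type u} (G : SimpleGraph V) (x : C × V) :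
    #(((⊥ : SimpleGraph C) □ G).neighborSet x) ≤ #(G.neighborSet x.2) := by
  refine (mk_le_mk_of_subset ?_).trans (mk_image_le (f := Prod.mk x.1))
  rintro ⟨c, v⟩ (⟨⟨⟩, -⟩ | ⟨hv, rfl⟩)
  exact ⟨v, hv, rfl⟩

lemma mk_neighborSet_toSimpleGraph_le {W : Type u} {H : SimpleGraph W}
    (γ : H.ConnectedComponent) (w : γ) : #(γ.toSimpleGraph.neighborSet w) ≤ #(H.neighborSet w) := by
  refine mk_le_of_injective (f := fun u => (⟨u.1, u.2⟩ : H.neighborSet w)) ?_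
  rintro ⟨⟨u, hu⟩, hu'⟩ ⟨⟨v, hv⟩, hv'⟩ h
  obtain rfl : u = v := congrArg Subtype.val h
  rfl

theorem ContainsConnected.exists_injective_hom_boxProd {κ : Cardinal.{u}} {V C W : Type u}
    {G : SimpleGraph V} (hG : ContainsConnected κ G) (H : SimpleGraph W) (hW : #W ≤ #C)
    (hdeg : ∀ w, #(H.neighborSet w) < κ) :
    ∃ f : H →g (⊥ : SimpleGraph C) □ G, Injective f := by
  obtain ⟨code⟩ := (le_def _ _).1 (mk_quot_le.trans hW : #H.ConnectedComponent ≤ #C)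
  choose f hf using fun γ : H.ConnectedComponent => hG γ.toSimpleGraph γ.connected_toSimpleGraph
    fun w => (mk_neighborSet_toSimpleGraph_le γ w).trans_lt (hdeg w)
  refine ⟨H.homOfConnectedComponents fun γ => (boxProdRight ⊥ G (code γ)).toHom.comp (f γ), ?_⟩
  have key : ∀ (γ γ' : H.ConnectedComponent) (x : γ) (y : γ'), code γ = code γ' →
      f γ x = f γ' y → (x : W) = y := by
    rintro γ γ' x y hγ hxy
    obtain rfl := code.injective hγ
    exact congrArg Subtype.val (hf γ hxy)
  exact fun a b hab => key _ _ ⟨a, rfl⟩ ⟨b, rfl⟩ (congrArg Prod.fst hab) (congrArg Prod.snd hab)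

section Cliques

def iioCliques (α : Type*) [Preorder α] : SimpleGraph (α × α) :=
  fromRel fun x y => x.1 = y.1 ∧ x.2 < x.1 ∧ y.2 < y.1

variable {α : Type u} [Preorder α]

lemma iioCliques_neighborSet_subset (x : α × α) :
    (iioCliques α).neighborSet x ⊆ Prod.mk x.1 '' Iio x.1 := by
  rintro ⟨q, p⟩ ⟨-, ⟨rfl, -, hp⟩ | ⟨rfl, hp, -⟩⟩ <;> exact ⟨p, hp, rfl⟩

lemma exists_injective_hom_iioCliques {W : Type u} (H : SimpleGraph W) {q : α}
    (hq : #W ≤ #(Iio q)) : ∃ f : H →g iioCliques α, Injective f := by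
  obtain ⟨e⟩ := (le_def _ _).1 hq
  have he : Injective fun w => (q, (e w : α)) := fun a b h =>
    e.injective (Subtype.ext (congrArg Prod.snd h))
  exact ⟨⟨fun w => (q, e w), fun {a b} hab =>
    (fromRel_adj _ _ _).2 ⟨he.ne hab.ne, Or.inl ⟨rfl, (e a).2, (e b).2⟩⟩⟩, he⟩

end Cliques

section StageGraph

variable {I P : Type*} [LinearOrder I] (slot : I → Set P)

-- A triple is read as (stage, block, position).
def IsSlotted (x : I × I × P) : Prop := x.2.1 ≤ x.1 ∧ x.2.2 ∈ slot x.2.1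

def stageGraph : SimpleGraph (I × I × P) :=
  fromRel fun x y => IsSlotted slot x ∧ IsSlotted slot y ∧ y.2.1 ≤ x.1 ∧ x.1 ≤ y.1

variable {slot}

lemma stageGraph_neighborSet_subset (hslot : Monotone slot) (x : I × I × P) :
    (stageGraph slot).neighborSet x ⊆ {y | y.2.2 ∈ slot x.1} := by
  rintro y ⟨-, ⟨-, ⟨-, hy⟩, hyx, -⟩ | ⟨⟨hby, hy⟩, -, -, hyx⟩⟩
  · exact hslot hyx hy
  · exact hslot (hby.trans hyx) hy

end StageGraph

lemma mk_neighborSet_stageGraph_le {I P : Type u} [LinearOrder I] {slot : I → Set P}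
    (hslot : Monotone slot) (x : I × I × P) :
    #((stageGraph slot).neighborSet x) ≤ #I * #I * #(slot x.1) := by
  calc #((stageGraph slot).neighborSet x) ≤ #{y : I × I × P // y.2.2 ∈ slot x.1} :=
        mk_le_mk_of_subset (stageGraph_neighborSet_subset hslot x)
    _ ≤ #(I × I × slot x.1) :=
        mk_le_of_injective (f := fun y => (y.1.1, y.1.2.1, ⟨y.1.2.2, y.2⟩))
          (by rintro ⟨⟨_, _, _⟩, _⟩ ⟨⟨_, _, _⟩, _⟩ h; simp_all)
    _ = #I * #I * #(slot x.1) := by simp [mul_assoc]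

theorem Connected.exists_injective_hom_stageGraph {I P W : Type} [LinearOrder I]
    [WellFoundedLT I] {slot : I → Set P} (hslot : Monotone slot) (hinf : ∀ i, ℵ₀ ≤ #(slot i))
    {H : SimpleGraph W} (hH : H.Connected) (hdeg : ∀ w, ∃ i, #(H.neighborSet w) ≤ #(slot i)) :
    ∃ f : H →g stageGraph slot, Injective f := by
  obtain ⟨w₀⟩ := hH.nonempty
  let low i : Set W := {v | #(H.neighborSet v) ≤ #(slot i)}
  have hlow : Monotone low := fun i j hij v (hv : #_ ≤ #(slot i)) =>
    show #_ ≤ #(slot j) from hv.trans (mk_le_mk_of_subset (hslot hij))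
  choose stage hstage using hH.exists_mem_reachWithin hlow hdeg w₀
  let block w := wellFounded_lt.min (stage '' insert w (H.neighborSet w))
    ⟨_, mem_image_of_mem _ (mem_insert w _)⟩
  have hblock_le : ∀ w, ∀ u ∈ insert w (H.neighborSet w), block w ≤ stage u :=
    fun w u hu => wellFounded_lt.min_le (mem_image_of_mem _ hu)
  have hfiber : ∀ i, #{w // block w = i} ≤ #(slot i) := by
    intro i
    have hcore : #(H.reachWithin (low i) w₀) ≤ #(slot i) :=
      mk_reachWithin_le (hinf i) (fun v hv => hv) w₀
    refine (mk_le_mk_of_subset ?_).trans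
      (mk_union_biUnion_neighborSet_le (hinf i) hcore fun u hu =>
        (reachWithin_subset hu : u ∈ low i))
    intro w (hw : block w = i)
    obtain ⟨u, hu, rfl⟩ : ∃ u ∈ insert w (H.neighborSet w), stage u = i :=
      hw ▸ wellFounded_lt.min_mem (stage '' insert w (H.neighborSet w)) _
    rcases hu with rfl | hu
    · exact Or.inl (hstage _)
    · exact Or.inr (mem_biUnion (hstage u) hu.symm)
  obtain ⟨pos, hpos, hinj⟩ := exists_injective_prod_of_mk_fiber_le block slot hfiber
  have hslotted w : IsSlotted slot (stage w, block w, pos w) :=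
    ⟨hblock_le w w (mem_insert w _), hpos w⟩
  have hf : Injective fun w => (stage w, block w, pos w) := fun a b h => hinj (congrArg Prod.snd h)
  refine ⟨⟨fun w => (stage w, block w, pos w), fun {a b} hab => ?_⟩, hf⟩
  refine (fromRel_adj _ _ _).2 ⟨hf.ne hab.ne, ?_⟩
  rcases le_total (stage a) (stage b) with h | h
  · exact Or.inl ⟨hslotted a, hslotted b, hblock_le b a (mem_insert_of_mem _ hab.symm), h⟩
  · exact Or.inr ⟨hslotted b, hslotted a, hblock_le a b (mem_insert_of_mem _ hab), h⟩

lemma exists_containsConnected_of_isRegular {κ : Cardinal.{0}} (hκ : κ.IsRegular)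
    (hκ₀ : ℵ₀ < κ) : ∃ (V : Type) (G : SimpleGraph V), #V ≤ κ ∧
      (∀ v, #(G.neighborSet v) < κ) ∧ ContainsConnected κ G := by
  refine ⟨κ.ord.ToType × κ.ord.ToType, iioCliques _, ?_, fun x => ?_, fun W H hH hdeg => ?_⟩
  · simpa using mul_le_of_le hκ.aleph0_le le_rfl le_rfl
  · exact ((mk_le_mk_of_subset (iioCliques_neighborSet_subset x)).trans mk_image_le).trans_lt
      (mk_Iio_ord_toType_lt x.1)
  · obtain ⟨q, hq⟩ := exists_le_mk_Iio_ord_toType (hH.mk_lt_of_isRegular hκ hκ₀ hdeg)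
    exact exists_injective_hom_iioCliques H hq

lemma exists_containsConnected_of_cof_lt {κ : Cardinal.{0}} (hκ₀ : ℵ₀ < κ)
    (hcof : κ.ord.cof < κ) : ∃ (V : Type) (G : SimpleGraph V), #V ≤ κ ∧
      (∀ v, #(G.neighborSet v) < κ) ∧ ContainsConnected κ G := by
  obtain ⟨S, hS, hSc⟩ := Order.exists_cof_eq κ.ord.ToType
  rw [Ordinal.cof_toType] at hSc
  obtain ⟨a₀, ha₀⟩ := exists_le_mk_Iio_ord_toType hκ₀
  let slot (i : S) : Set κ.ord.ToType := Iio (max (i : κ.ord.ToType) a₀)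
  have hslot : Monotone slot := fun i j hij => Iio_subset_Iio (max_le_max hij le_rfl)
  refine ⟨S × S × κ.ord.ToType, stageGraph slot, ?_, fun x => ?_, fun W H hH hdeg => ?_⟩
  · have hS : #S ≤ κ := hSc.trans_le (Ordinal.cof_ord_le κ)
    simpa using mul_le_of_le hκ₀.le hS (mul_le_of_le hκ₀.le hS le_rfl)
  · have hS : #S < κ := hSc.trans_lt hcof
    exact (mk_neighborSet_stageGraph_le hslot x).trans_lt
      (mul_lt_of_lt hκ₀.le (mul_lt_of_lt hκ₀.le hS hS) (mk_Iio_ord_toType_lt _))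
  · refine hH.exists_injective_hom_stageGraph hslot
      (fun i => ha₀.trans (mk_le_mk_of_subset (Iio_subset_Iio (le_max_right _ _)))) fun w => ?_
    obtain ⟨x, hx⟩ := exists_le_mk_Iio_ord_toType (hdeg w)
    obtain ⟨i, hi, hxi⟩ := hS x
    exact ⟨⟨i, hi⟩, hx.trans (mk_le_mk_of_subset (Iio_subset_Iio (hxi.trans (le_max_left _ _))))⟩

end SimpleGraph

theorem stmt_9_general (lam : Cardinal.{0}) (h0 : ℵ₀ < lam) :
    ∃ (V : Type) (G : SimpleGraph V), #V ≤ lam ∧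
      (∀ v, #(G.neighborSet v) < lam) ∧
      ∀ (W : Type) (H : SimpleGraph W), #W ≤ lam →
        (∀ w, #(H.neighborSet w) < lam) →
        ∃ f : W → V, Function.Injective f ∧
          ∀ a b, H.Adj a b → G.Adj (f a) (f b) := by
  obtain ⟨V, G, hV, hdeg, hG⟩ : ∃ (V : Type) (G : SimpleGraph V), #V ≤ lam ∧
      (∀ v, #(G.neighborSet v) < lam) ∧ ContainsConnected lam G := by
    by_cases hreg : lam.IsRegular
    · exact exists_containsConnected_of_isRegular hreg h0
    · exact exists_containsConnected_of_cof_lt h0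
        ((Ordinal.cof_ord_le lam).lt_of_not_ge fun h => hreg ⟨h0.le, h⟩)
  refine ⟨lam.ord.ToType × V, (⊥ : SimpleGraph _) □ G, ?_,
    fun x => (mk_neighborSet_boxProd_bot_le G x).trans_lt (hdeg x.2), fun W H hW hHdeg => ?_⟩
  · simpa using mul_le_of_le h0.le le_rfl hV
  · obtain ⟨f, hf⟩ :=
      hG.exists_injective_hom_boxProd (C := lam.ord.ToType) H (by simpa using hW) hHdeg
    exact ⟨f, hf, fun a b => f.map_rel⟩

/-- Shelah: if `λ > ℵ₀` is a strong limit cardinal, then among the graphs with at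
most `λ` vertices in which every vertex has valence `< λ`, there is a universal one
(every such graph embeds into it as a subgraph). -/
theorem stmt_9 (lam : Cardinal.{0}) (h0 : ℵ₀ < lam) (h1 : lam.IsStrongLimit) :
    ∃ (V : Type) (G : SimpleGraph V), #V ≤ lam ∧
      (∀ v, #(G.neighborSet v) < lam) ∧
      ∀ (W : Type) (H : SimpleGraph W), #W ≤ lam →
        (∀ w, #(H.neighborSet w) < lam) →
        ∃ f : W → V, Function.Injective f ∧
          ∀ a b, H.Adj a b → G.Adj (f a) (f b) :=
  stmt_9_general lam h0
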